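/- arXiv:2307.09429 — 2 statements merged into one kernel-verified Lean document; each statement's English description precedes it below -/
import Mathlib

section
/- Let C ⊂ ℝ^d be a convex body with interior lattice points of Λ only the origin (int C ∩ Λ = {0}), and let A ⊆ ∂C ∩ Λ be a set of boundary lattice points such that no two distinct points of A lie in a common face of C of dimension d−1 (facet). Then |A| ≤ 2^{k+1} − 2, where k is the dimension of the linear span of A. -/
open scoped Pointwise

noncomputable section

/-- Standard dot product on `Fin d → ℝ`. -/
def dot {d : ℕ} (x y : Fin d → ℝ) : ℝ := ∑ i, x i * y i

/-- A convex body: convex, compact, with nonempty interior. -/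
def IsConvexBody {d : ℕ} (C : Set (Fin d → ℝ)) : Prop :=
  Convex ℝ C ∧ IsCompact C ∧ (interior C).Nonempty

/-- A full-dimensional lattice: the integer span of a basis of `ℝ^d`. -/
def IsLattice {d : ℕ} (L : Set (Fin d → ℝ)) : Prop :=
  ∃ B : Module.Basis (Fin d) ℝ (Fin d → ℝ),
    L = Set.range (fun z : Fin d → ℤ => ∑ i, (z i : ℝ) • B i)

/-- The dual lattice: vectors pairing integrally with all lattice vectors. -/
def dualLattice {d : ℕ} (L : Set (Fin d → ℝ)) : Set (Fin d → ℝ) :=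
  {y | ∀ x ∈ L, ∃ n : ℤ, dot x y = (n : ℝ)}

/-- Width of `C` in direction `y`: `sup_{a,b ∈ C} y·(a-b)`. -/
def widthDir {d : ℕ} (C : Set (Fin d → ℝ)) (y : Fin d → ℝ) : ℝ :=
  sSup {r | ∃ a ∈ C, ∃ b ∈ C, r = dot y (a - b)}

/-- Lattice width of `C` with respect to a lattice `L`. -/
def latticeWidth {d : ℕ} (C L : Set (Fin d → ℝ)) : ℝ :=
  sInf {w | ∃ y ∈ dualLattice L, y ≠ 0 ∧ w = widthDir C y}

/-- A primitive lattice vector: a nonzero lattice vector such that no proper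
fraction of it is a lattice vector. -/
def IsPrimitiveVec {d : ℕ} (L : Set (Fin d → ℝ)) (v : Fin d → ℝ) : Prop :=
  v ∈ L ∧ v ≠ 0 ∧ ∀ t : ℝ, 0 < t → t < 1 → t • v ∉ L

/-- Lattice diameter of `C` w.r.t. `L`: the supremum of lattice lengths of
lattice segments contained in `C`, a segment of lattice length `t` being one of
the form `[a, a + t • v]` with `v` primitive in `L`. -/
def latticeDiam {d : ℕ} (C L : Set (Fin d → ℝ)) : ℝ :=
  sSup {t : ℝ | 0 ≤ t ∧ ∃ a v, IsPrimitiveVec L v ∧ segment ℝ a (a + t • v) ⊆ C}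

/-- The polar body `K* = {y : x·y ≤ 1 ∀ x ∈ K}`. -/
def polarBody {d : ℕ} (K : Set (Fin d → ℝ)) : Set (Fin d → ℝ) :=
  {y | ∀ x ∈ K, dot x y ≤ 1}

/-- First successive minimum of `K` w.r.t. the lattice `L`. -/
def lambda1 {d : ℕ} (K L : Set (Fin d → ℝ)) : ℝ :=
  sInf {r : ℝ | 0 ≤ r ∧ ∃ x ∈ L, x ≠ 0 ∧ x ∈ r • K}

/-- The difference body `C - C`. -/
def diffBody {d : ℕ} (C : Set (Fin d → ℝ)) : Set (Fin d → ℝ) := C - C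

/-- `C` is lattice reduced w.r.t. `L`: it is a convex body and no convex body
properly contained in it has the same lattice width. -/
def IsLatticeReduced {d : ℕ} (C L : Set (Fin d → ℝ)) : Prop :=
  IsConvexBody C ∧ ∀ C', IsConvexBody C' → C' ⊂ C → latticeWidth C' L ≠ latticeWidth C L

/-- `C` is lattice complete w.r.t. `L`: it is a convex body and no convex body
properly containing it has the same lattice diameter. -/
def IsLatticeComplete {d : ℕ} (C L : Set (Fin d → ℝ)) : Prop :=
  IsConvexBody C ∧ ∀ C', IsConvexBody C' → C ⊂ C' → latticeDiam C' L ≠ latticeDiam C L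

/-- A width direction of `C`: a nonzero dual lattice vector realizing the
lattice width. -/
def IsWidthDirection {d : ℕ} (C L : Set (Fin d → ℝ)) (y : Fin d → ℝ) : Prop :=
  y ∈ dualLattice L ∧ y ≠ 0 ∧ widthDir C y = latticeWidth C L

/-- A diameter direction of `C`: a primitive lattice vector parallel to a
lattice segment in `C` of maximal lattice length. -/
def IsDiameterDirection {d : ℕ} (C L : Set (Fin d → ℝ)) (v : Fin d → ℝ) : Prop :=
  IsPrimitiveVec L v ∧ ∃ a, segment ℝ a (a + latticeDiam C L • v) ⊆ C

/-- A diameter segment of `C`: a lattice segment contained in `C` whose lattice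
length equals the lattice diameter of `C`. -/
def IsDiameterSegment {d : ℕ} (C L : Set (Fin d → ℝ)) (a b : Fin d → ℝ) : Prop :=
  segment ℝ a b ⊆ C ∧ ∃ v, IsPrimitiveVec L v ∧ b = a + latticeDiam C L • v

/-- A polytope: the convex hull of finitely many points. -/
def IsPolytope {d : ℕ} (C : Set (Fin d → ℝ)) : Prop :=
  ∃ V : Finset (Fin d → ℝ), C = convexHull ℝ (V : Set (Fin d → ℝ))

/-- A facet of a `d`-dimensional body: a face (extreme subset) of dimension `d-1`. -/
def IsFacetOf {d : ℕ} (P F : Set (Fin d → ℝ)) : Prop :=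
  IsExtreme ℝ P F ∧ Module.finrank ℝ (vectorSpan ℝ F) + 1 = d

/-- The integer lattice `ℤ^d` inside `Fin d → ℝ`. -/
def intLattice (d : ℕ) : Set (Fin d → ℝ) := {x | ∀ i, ∃ n : ℤ, x i = (n : ℝ)}

/-!
Put `M = span_ℤ A ⊆ Λ`, a free `ℤ`-module of rank `k = dim span_ℝ A` because it is discrete, and
sort the points of `A` by their class in `M / 2M ≅ (ℤ/2)^k`. If `a ≡ b` then the midpoint
`(a + b)/2 = b + (a - b)/2` is a lattice point of `C`: in the interior it must be `0`, so `a = -b`;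
on the boundary a supporting hyperplane puts `a` and `b` on a common facet, so `a = b`. Hence every
class holds at most two points of `A`. The class `0` holds none, since for `a ∈ 2M` the point
`a/2 ≠ 0` lies in `Λ ∩ int C`. This leaves `2 (2^k - 1)` points.
-/

open Module Set Submodule

theorem Set.finite_and_ncard_le_of_eq_or_eq_neg {α β : Type*} [Neg α] [Fintype β]
    (f : α → β) {b₀ : β} {S : Set α} (hS₀ : ∀ s ∈ S, f s ≠ b₀)
    (hS : ∀ s ∈ S, ∀ t ∈ S, f s = f t → s = t ∨ s = -t) :
    S.Finite ∧ S.ncard ≤ 2 * (Fintype.card β - 1) := by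
  classical
  have hfiber : ∀ s ∈ S, S ∩ f ⁻¹' {f s} ⊆ {s, -s} := fun s hs t ⟨ht, hts⟩ =>
    (hS t ht s hs hts).imp id id
  have hfin : S.Finite := by
    refine (Set.finite_iUnion (f := fun b => S ∩ f ⁻¹' {b}) fun b => ?_).subset fun s hs =>
      Set.mem_iUnion_of_mem (f s) (⟨hs, rfl⟩ : s ∈ S ∩ f ⁻¹' {f s})
    rcases (S ∩ f ⁻¹' {b}).eq_empty_or_nonempty with h | ⟨s, hs, rfl⟩
    · exact h ▸ Set.finite_empty
    · exact (Set.toFinite {s, -s}).subset (hfiber s hs)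
  refine ⟨hfin, ?_⟩
  have himage : hfin.toFinset.image f ⊆ Finset.univ.erase b₀ := by
    simp only [Finset.subset_iff, Finset.mem_image, Set.Finite.mem_toFinset]
    rintro _ ⟨s, hs, rfl⟩
    exact Finset.mem_erase.2 ⟨hS₀ s hs, Finset.mem_univ _⟩
  have hfiber_card : ∀ b ∈ hfin.toFinset.image f,
      (hfin.toFinset.filter fun s => f s = b).card ≤ 2 := by
    simp only [Finset.mem_image, Set.Finite.mem_toFinset]
    rintro _ ⟨s, hs, rfl⟩
    calc (hfin.toFinset.filter fun t => f t = f s).card ≤ ({s, -s} : Finset α).card :=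
          Finset.card_le_card fun t ht => by
            simp only [Finset.mem_filter, Set.Finite.mem_toFinset] at ht
            simpa using hfiber s hs ht
      _ ≤ 2 := Finset.card_le_two
  calc S.ncard = hfin.toFinset.card := Set.ncard_eq_toFinset_card S hfin
    _ ≤ 2 * (hfin.toFinset.image f).card := Finset.card_le_mul_card_image _ 2 hfiber_card
    _ ≤ 2 * (Fintype.card β - 1) := by
      grw [Finset.card_le_card himage, Finset.card_erase_of_mem (Finset.mem_univ _),
        Finset.card_univ]

theorem Module.Basis.exists_eq_two_smul_of_forall_even {ι N : Type*} [Fintype ι]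
    [AddCommGroup N] (c : Basis ι ℤ N) {x : N} (hx : ∀ i, Even (c.repr x i)) :
    ∃ w, x = 2 • w := by
  choose n hn using hx
  refine ⟨∑ i, n i • c i, ?_⟩
  conv_lhs => rw [← c.sum_repr x]
  simp only [hn, Finset.smul_sum, add_smul, two_nsmul, Finset.sum_add_distrib]

theorem Module.Free.finite_and_ncard_le_of_sub_eq_two_smul {N : Type*} [AddCommGroup N]
    [Module.Free ℤ N] [Module.Finite ℤ N] {S : Set N} (hS₀ : ∀ s ∈ S, ∀ w, s ≠ 2 • w)
    (hS : ∀ s ∈ S, ∀ t ∈ S, ∀ w, s - t = 2 • w → s = t ∨ s = -t) :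
    S.Finite ∧ S.ncard ≤ 2 ^ (finrank ℤ N + 1) - 2 := by
  let c := Module.Free.chooseBasis ℤ N
  let parity : N → (Module.Free.ChooseBasisIndex ℤ N → ZMod 2) := fun x i => c.repr x i
  have hparity : ∀ x y, parity x = parity y → ∃ w, x - y = 2 • w := fun x y h =>
    c.exists_eq_two_smul_of_forall_even fun i => by
      rw [map_sub, Finsupp.sub_apply, even_iff_two_dvd]
      exact_mod_cast (ZMod.intCast_eq_intCast_iff_dvd_sub _ _ 2).1 (congrFun h i).symm
  obtain ⟨hfin, hcard⟩ := Set.finite_and_ncard_le_of_eq_or_eq_neg parity (b₀ := 0)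
    (fun s hs h0 => by
      obtain ⟨w, hw⟩ := hparity s 0 (h0.trans (by ext; simp [parity]))
      exact hS₀ s hs w (by simpa using hw))
    fun s hs t ht hst => by
      obtain ⟨w, hw⟩ := hparity s t hst
      exact hS s hs t ht w hw
  refine ⟨hfin, hcard.trans_eq ?_⟩
  rw [Fintype.card_fun, ZMod.card, ← Module.finrank_eq_card_chooseBasisIndex, pow_succ]
  have := Nat.one_le_two_pow (n := finrank ℤ N)
  omega

theorem Submodule.finite_and_ncard_le_of_sub_eq_two_smul {E : Type*} [AddCommGroup E]
    (M : Submodule ℤ E) [Module.Free ℤ M] [Module.Finite ℤ M] {S : Set E} (hSM : S ⊆ M)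
    (hS₀ : ∀ s ∈ S, ∀ w ∈ M, s ≠ 2 • w)
    (hS : ∀ s ∈ S, ∀ t ∈ S, ∀ w ∈ M, s - t = 2 • w → s = t ∨ s = -t) :
    S.Finite ∧ S.ncard ≤ 2 ^ (finrank ℤ M + 1) - 2 := by
  have hS' : Subtype.val '' (Subtype.val ⁻¹' S : Set M) = S := by
    rwa [Set.image_preimage_eq_iff, Subtype.range_coe]
  obtain ⟨hfin, hcard⟩ := Module.Free.finite_and_ncard_le_of_sub_eq_two_smul
    (S := (Subtype.val ⁻¹' S : Set M))
    (fun s hs w h => hS₀ s hs w w.2 (by simpa using congrArg Subtype.val h))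
    fun s hs t ht w h => (hS s hs t ht w w.2 (by simpa using congrArg Subtype.val h)).imp
      Subtype.ext fun h' => Subtype.ext (by simpa using h')
  rw [← hS']
  exact ⟨hfin.image _, (Set.ncard_image_of_injective _ Subtype.val_injective).trans_le hcard⟩

theorem IsExtreme.union {𝕜 E : Type*} [Semiring 𝕜] [PartialOrder 𝕜] [AddCommMonoid E]
    [SMul 𝕜 E] {C X Y : Set E} (hX : IsExtreme 𝕜 C X) (hY : IsExtreme 𝕜 C Y) :
    IsExtreme 𝕜 C (X ∪ Y) :=
  ⟨union_subset hX.1 hY.1, fun _ hx₁ _ hx₂ _ hx hseg =>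
    hx.elim (fun h => Or.inl (hX.2 hx₁ hx₂ h hseg)) fun h => Or.inr (hY.2 hx₁ hx₂ h hseg)⟩

theorem finrank_vectorSpan_insert_of_notMem_affineSpan {k V P : Type*} [DivisionRing k]
    [AddCommGroup V] [Module k V] [AddTorsor V P] [FiniteDimensional k V] {X : Set P} {e : P}
    (hX : X.Nonempty) (he : e ∉ affineSpan k X) :
    finrank k (vectorSpan k (insert e X)) = finrank k (vectorSpan k X) + 1 := by
  obtain ⟨x, hx⟩ := hX
  have hlt : vectorSpan k X < vectorSpan k (insert e X) := by
    refine lt_of_le_of_ne (vectorSpan_mono k (subset_insert e X)) fun h => he ?_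
    have hv : e -ᵥ x ∈ vectorSpan k X :=
      h ▸ vsub_mem_vectorSpan k (mem_insert e X) (mem_insert_of_mem e hx)
    rw [← vsub_vadd e x]
    exact AffineSubspace.vadd_mem_of_mem_direction (by rwa [direction_affineSpan])
      (mem_affineSpan k hx)
  exact le_antisymm (finrank_vectorSpan_insert_le_set k X e)
    (Submodule.finrank_lt_finrank_of_lt hlt)

theorem exists_isExtreme_superset_finrank_vectorSpan_eq {𝕜 E : Type*} [DivisionRing 𝕜]
    [PartialOrder 𝕜] [AddCommGroup E] [Module 𝕜 E] [FiniteDimensional 𝕜 E] {C X : Set E}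
    (hC : affineSpan 𝕜 (C.extremePoints 𝕜) = ⊤) (hX : IsExtreme 𝕜 C X) (hXne : X.Nonempty)
    {n : ℕ} (hXn : finrank 𝕜 (vectorSpan 𝕜 X) ≤ n) (hn : n ≤ finrank 𝕜 E) :
    ∃ Y, IsExtreme 𝕜 C Y ∧ X ⊆ Y ∧ finrank 𝕜 (vectorSpan 𝕜 Y) = n := by
  induction n with
  | zero => exact ⟨X, hX, subset_rfl, by omega⟩
  | succ n ih =>
    rcases hXn.eq_or_lt with hXn | hXn
    · exact ⟨X, hX, subset_rfl, hXn⟩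
    obtain ⟨Y, hY, hXY, hYn⟩ := ih (by omega) (by omega)
    obtain ⟨e, he, heY⟩ : ∃ e ∈ C.extremePoints 𝕜, e ∉ affineSpan 𝕜 Y := by
      by_contra! h
      have hYtop : affineSpan 𝕜 Y = ⊤ := top_unique (hC ▸ affineSpan_le.2 h)
      have : finrank 𝕜 (vectorSpan 𝕜 Y) = finrank 𝕜 E := by
        rw [← direction_affineSpan, hYtop, AffineSubspace.direction_top, finrank_top]
      omega
    refine ⟨insert e Y, by simpa using (isExtreme_singleton.2 he).union hY,
      hXY.trans (subset_insert e Y), ?_⟩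
    rw [finrank_vectorSpan_insert_of_notMem_affineSpan (hXne.mono hXY) heY, hYn]

theorem affineSpan_extremePoints_eq_top {E : Type*} [NormedAddCommGroup E] [NormedSpace ℝ E]
    [FiniteDimensional ℝ E] {C : Set E} (hconv : Convex ℝ C) (hcomp : IsCompact C)
    (hint : (interior C).Nonempty) : affineSpan ℝ (C.extremePoints ℝ) = ⊤ := by
  have hC : C ⊆ affineSpan ℝ (C.extremePoints ℝ) := by
    conv_lhs => rw [← closure_convexHull_extremePoints hcomp hconv]
    exact closure_minimal (convexHull_subset_affineSpan _)
      (AffineSubspace.closed_of_finiteDimensional _)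
  exact top_unique ((isOpen_interior.affineSpan_eq_top hint).symm.le.trans
    (affineSpan_le.2 (interior_subset.trans hC)))

theorem Convex.exists_forall_le_of_notMem_interior {E : Type*} [NormedAddCommGroup E]
    [NormedSpace ℝ E] {C : Set E} (hconv : Convex ℝ C) (hint : (interior C).Nonempty) {m : E}
    (hm : m ∉ interior C) : ∃ f : StrongDual ℝ E, f ≠ 0 ∧ ∀ x ∈ C, f x ≤ f m := by
  obtain ⟨f, hf⟩ := geometric_hahn_banach_open_point hconv.interior isOpen_interior hm
  refine ⟨f, ?_, fun x hx => ?_⟩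
  · rintro rfl
    obtain ⟨y, hy⟩ := hint
    simpa using hf y hy
  · have hx' : x ∈ closure (interior C) := by
      rw [hconv.closure_interior_eq_closure_of_nonempty_interior hint]
      exact subset_closure hx
    exact closure_minimal (fun y hy => (hf y hy).le)
      (isClosed_le f.continuous continuous_const) hx'

/- `IsFacetOf` asks only for an extreme set, not a convex one, so the exposed face cut out by a
supporting hyperplane at the midpoint can be padded with extreme points up to dimension `d - 1`. -/
theorem exists_isFacetOf_of_midpoint_notMem_interior {d : ℕ} {C : Set (Fin d → ℝ)}
    (hC : IsConvexBody C) {a b : Fin d → ℝ} (ha : a ∈ C) (hb : b ∈ C)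
    (hab : midpoint ℝ a b ∉ interior C) : ∃ F, IsFacetOf C F ∧ a ∈ F ∧ b ∈ F := by
  obtain ⟨hconv, hcomp, hint⟩ := hC
  obtain ⟨f, hf0, hf⟩ := hconv.exists_forall_le_of_notMem_interior hint hab
  have hfm : f (midpoint ℝ a b) = (f a + f b) / 2 := by
    rw [midpoint_eq_smul_add, map_smul, map_add, smul_eq_mul, invOf_eq_inv]
    ring
  have haF : a ∈ f.toExposed C := ⟨ha, fun y hy => by linarith [hf y hy, hf b hb]⟩
  have hbF : b ∈ f.toExposed C := ⟨hb, fun y hy => by linarith [hf y hy, hf a ha]⟩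
  have hker : vectorSpan ℝ (f.toExposed C) ≤ LinearMap.ker (f : (Fin d → ℝ) →ₗ[ℝ] ℝ) := by
    rw [vectorSpan_def, Submodule.span_le]
    rintro _ ⟨x, hx, y, hy, rfl⟩
    simp [le_antisymm (hy.2 x hx.1) (hx.2 y hy.1)]
  have hdim : finrank ℝ (vectorSpan ℝ (f.toExposed C)) + 1 ≤ d := by
    have := Module.Dual.finrank_ker_add_one_of_ne_zero
      (f := (f : (Fin d → ℝ) →ₗ[ℝ] ℝ)) fun h => hf0 (ContinuousLinearMap.coe_injective h)
    rw [Module.finrank_fin_fun] at this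
    have := Submodule.finrank_mono hker
    omega
  obtain ⟨F, hF, hsub, hFd⟩ := exists_isExtreme_superset_finrank_vectorSpan_eq
    (affineSpan_extremePoints_eq_top hconv hcomp hint)
    ContinuousLinearMap.toExposed.isExposed.isExtreme ⟨a, haF⟩ (n := d - 1) (by omega) (by simp)
  exact ⟨F, ⟨hF, by omega⟩, hsub haF, hsub hbF⟩

theorem range_sum_intCast_smul_eq_span {ι R E : Type*} [Fintype ι] [Ring R] [AddCommGroup E]
    [Module R E] (v : ι → E) :
    Set.range (fun z : ι → ℤ => ∑ i, (z i : R) • v i) = span ℤ (Set.range v) := by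
  ext x
  simp only [Set.mem_range, SetLike.mem_coe, mem_span_range_iff_exists_fun,
    Int.cast_smul_eq_zsmul R]

section LatticePoints

variable {E : Type*} [NormedAddCommGroup E] [NormedSpace ℝ E] {C : Set E} {Λ : Submodule ℤ E}

theorem ne_two_smul_of_mem_frontier (hconv : Convex ℝ C) (hint : interior C ∩ Λ = {0})
    {a w : E} (ha : a ∈ frontier C) (hw : w ∈ Λ) : a ≠ 2 • w := by
  rintro rfl
  have h0 : (0 : E) ∈ interior C := (hint.symm.subset rfl).1
  have hwC : w ∈ interior C :=
    hconv.openSegment_interior_closure_subset_interior h0 (frontier_subset_closure ha)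
      ⟨1 / 2, 1 / 2, by norm_num, by norm_num, by norm_num, by module⟩
  obtain rfl : w = 0 := hint.subset ⟨hwC, hw⟩
  exact ha.2 (by simpa using h0)

theorem eq_neg_of_sub_eq_two_smul (hint : interior C ∩ Λ = {0}) {a b w : E} (hb : b ∈ Λ)
    (hw : w ∈ Λ) (hab : a - b = 2 • w) (hm : midpoint ℝ a b ∈ interior C) : a = -b := by
  obtain rfl : a = 2 • w + b := eq_add_of_sub_eq hab
  have hmid : midpoint ℝ (2 • w + b) b = b + w := by
    rw [midpoint_eq_smul_add, invOf_eq_inv]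
    module
  rw [hmid] at hm
  obtain rfl : w = -b := eq_neg_of_add_eq_zero_right (hint.subset ⟨hm, add_mem hb hw⟩)
  module

end LatticePoints

/-- if `C` is a convex body whose only interior lattice point is the
origin and `A` is a set of boundary lattice points, no two of which lie in a
common facet of `C`, then `|A| ≤ 2^(k+1) - 2` where `k = dim span A`. -/
theorem card_boundary_points_le {d : ℕ} (C L : Set (Fin d → ℝ))
    (hC : IsConvexBody C) (hL : IsLattice L)
    (hint : interior C ∩ L = {0})
    (A : Set (Fin d → ℝ)) (hA : A ⊆ frontier C ∩ L)
    (hsep : ∀ a ∈ A, ∀ b ∈ A, a ≠ b → ¬ ∃ F, IsFacetOf C F ∧ a ∈ F ∧ b ∈ F) :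
    A.Finite ∧ A.ncard ≤ 2 ^ (Module.finrank ℝ (Submodule.span ℝ A) + 1) - 2 := by
  obtain ⟨B, rfl⟩ := hL
  rw [range_sum_intCast_smul_eq_span] at hint hA
  have hAC : A ⊆ C := fun a ha => hC.2.1.isClosed.frontier_subset (hA ha).1
  have hAΛ : span ℤ A ≤ span ℤ (Set.range B) := span_le.2 fun a ha => (hA ha).2
  have : DiscreteTopology (span ℤ A) :=
    DiscreteTopology.of_subset (inferInstanceAs (DiscreteTopology (span ℤ (Set.range B)))) hAΛ
  rw [← Set.finrank, Real.finrank_eq_int_finrank_of_discrete this]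
  refine (span ℤ A).finite_and_ncard_le_of_sub_eq_two_smul subset_span
    (fun a ha w hw => ne_two_smul_of_mem_frontier hC.1 hint (hA ha).1 (hAΛ hw))
    fun a ha b hb w hw hab => ?_
  by_cases hm : midpoint ℝ a b ∈ interior C
  · exact .inr (eq_neg_of_sub_eq_two_smul hint (hA hb).2 (hAΛ hw) hab hm)
  · by_contra hne
    exact hsep a ha b hb (not_or.1 hne).1
      (exists_isFacetOf_of_midpoint_notMem_interior hC (hAC ha) (hAC hb) hm)
end
end

section
/- Let C ⊂ ℝ^d be an origin-symmetric convex body and Λ a full-dimensional lattice. Then C is lattice reduced with respect to Λ if and only if its polar body C* is lattice complete with respect to the dual lattice Λ*. Moreover, the width directions of C with respect to Λ coincide with the diameter directions of C* with respect to Λ*. -/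
open scoped Pointwise

noncomputable section

/-!
Write `w(C, v)` for the width of `C` in direction `v`, `w_L(C)` for its lattice width and `D(K)`
for the lattice diameter with respect to the dual lattice. By symmetry and convexity a segment
`[a, a + t • v]` fits into `C*` iff the centred one does, i.e. iff `t * w(C, v) ≤ 4`; hence
`D(C*) = 4 / w_L(C)`, attained exactly in the width directions of `C`. For any convex body `K`
with `0` in its interior, the maximisers of `v` and `-v` on `K*` give two points of `K = K**` on
a line of direction `v`, whence `D(K) ≥ 4 / w_L(K*)`.

If `C` is reduced and `K ⊋ C*`, then `K* ⊊ C`, so `w_L(K*) < w_L(C)` and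
`D(K) ≥ 4 / w_L(K*) > 4 / w_L(C) = D(C*)`. If `C*` is complete and `C' ⊊ C` had the same lattice
width, its central symmetral `(C' - C') / 2` would have the same widths and still lie strictly
inside `C`, so its polar would strictly contain `C*` and have the same lattice diameter.
-/

open Filter Topology

section Dot

variable {d : ℕ}

theorem dot_comm (x y : Fin d → ℝ) : dot x y = dot y x := dotProduct_comm x y

theorem dot_smul_left (t : ℝ) (x y : Fin d → ℝ) : dot (t • x) y = t * dot x y :=
  smul_dotProduct t x y

theorem dot_smul_right (t : ℝ) (x y : Fin d → ℝ) : dot x (t • y) = t * dot x y :=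
  dotProduct_smul t x y

theorem dot_neg_left (x y : Fin d → ℝ) : dot (-x) y = -dot x y := neg_dotProduct x y

theorem dot_neg_right (x y : Fin d → ℝ) : dot x (-y) = -dot x y := dotProduct_neg x y

theorem dot_add_right (x y z : Fin d → ℝ) : dot x (y + z) = dot x y + dot x z :=
  dotProduct_add x y z

theorem dot_sub_right (x y z : Fin d → ℝ) : dot x (y - z) = dot x y - dot x z :=
  dotProduct_sub x y z

theorem continuous_dot (x : Fin d → ℝ) : Continuous (dot x) :=
  continuous_const.dotProduct continuous_id

theorem abs_dot_le (x y : Fin d → ℝ) : |dot x y| ≤ d * ‖x‖ * ‖y‖ :=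
  calc |∑ i, x i * y i| ≤ ∑ i, |x i * y i| := Finset.abs_sum_le_sum_abs _ _
    _ ≤ ∑ _i : Fin d, ‖x‖ * ‖y‖ := Finset.sum_le_sum fun i _ => by
        rw [abs_mul]
        exact mul_le_mul (norm_le_pi_norm x i) (norm_le_pi_norm y i) (abs_nonneg _) (norm_nonneg _)
    _ = d * ‖x‖ * ‖y‖ := by simp [mul_assoc]

theorem sq_norm_le_dot_self (y : Fin d → ℝ) : ‖y‖ ^ 2 ≤ dot y y := by
  have hy : ‖y‖ ≤ √(dot y y) := (pi_norm_le_iff_of_nonneg (Real.sqrt_nonneg _)).2 fun i =>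
    Real.abs_le_sqrt <| (sq (y i)).trans_le <|
      Finset.single_le_sum (f := fun j => y j * y j) (fun j _ => mul_self_nonneg _)
        (Finset.mem_univ i)
  calc ‖y‖ ^ 2 ≤ √(dot y y) ^ 2 := by gcongr
    _ = dot y y := Real.sq_sqrt (Finset.sum_nonneg fun i _ => mul_self_nonneg (y i))

theorem exists_mem_ball_le_dot {ε : ℝ} (hε : 0 < ε) (y : Fin d → ℝ) :
    ∃ x ∈ Metric.ball (0 : Fin d → ℝ) ε, ε / 2 * ‖y‖ ≤ dot y x := by
  rcases eq_or_ne y 0 with rfl | hy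
  · exact ⟨0, Metric.mem_ball_self hε, by simp [dot]⟩
  have hy : 0 < ‖y‖ := norm_pos_iff.2 hy
  refine ⟨(ε / (2 * ‖y‖)) • y, ?_, ?_⟩
  · rw [mem_ball_zero_iff, norm_smul, Real.norm_of_nonneg (by positivity)]
    field_simp
    linarith
  · rw [dot_smul_right]
    calc ε / 2 * ‖y‖ = ε / (2 * ‖y‖) * ‖y‖ ^ 2 := by field_simp
      _ ≤ ε / (2 * ‖y‖) * dot y y := by gcongr; exact sq_norm_le_dot_self y

theorem exists_pos_dot_of_mem_nhds {S : Set (Fin d → ℝ)} (hS : S ∈ 𝓝 0) {y : Fin d → ℝ}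
    (hy : y ≠ 0) : ∃ x ∈ S, 0 < dot y x := by
  obtain ⟨ε, hε, hball⟩ := Metric.mem_nhds_iff.1 hS
  obtain ⟨x, hx, hxy⟩ := exists_mem_ball_le_dot hε y
  exact ⟨x, hball hx, lt_of_lt_of_le (by have := norm_pos_iff.2 hy; positivity) hxy⟩

theorem exists_apply_eq_dot (f : (Fin d → ℝ) →ₗ[ℝ] ℝ) : ∃ u, ∀ x, f x = dot u x :=
  ⟨fun i => f fun j => if i = j then 1 else 0, fun x => by
    rw [f.pi_apply_eq_sum_univ x, dot_comm]; rfl⟩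

theorem exists_dot_lt_of_notMem {S : Set (Fin d → ℝ)} (hS : Convex ℝ S) (hSc : IsClosed S)
    {x : Fin d → ℝ} (hx : x ∉ S) : ∃ u c, (∀ s ∈ S, dot u s < c) ∧ c < dot u x := by
  obtain ⟨f, c, hf, hfx⟩ := geometric_hahn_banach_closed_point hS hSc hx
  obtain ⟨u, hu⟩ := exists_apply_eq_dot f.toLinearMap
  exact ⟨u, c, fun s hs => hu s ▸ hf s hs, hu x ▸ hfx⟩

end Dot

section Polar

variable {d : ℕ} {S T : Set (Fin d → ℝ)}

theorem zero_mem_polarBody (S : Set (Fin d → ℝ)) : 0 ∈ polarBody S :=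
  fun x _ => by simp [dot]

theorem polarBody_eq_biInter (S : Set (Fin d → ℝ)) :
    polarBody S = ⋂ x ∈ S, {y | dot x y ≤ 1} := by
  ext
  simp [polarBody]

theorem convex_polarBody (S : Set (Fin d → ℝ)) : Convex ℝ (polarBody S) := by
  rw [polarBody_eq_biInter]
  exact convex_iInter₂ fun x _ =>
    convex_halfSpace_le ⟨dot_add_right x, fun t y => dot_smul_right t x y⟩ 1

theorem isClosed_polarBody (S : Set (Fin d → ℝ)) : IsClosed (polarBody S) := by
  rw [polarBody_eq_biInter]
  exact isClosed_biInter fun x _ => isClosed_le (continuous_dot x) continuous_const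

theorem polarBody_anti (h : S ⊆ T) : polarBody T ⊆ polarBody S :=
  fun _ hy x hx => hy x (h hx)

theorem polarBody_neg (S : Set (Fin d → ℝ)) : polarBody (-S) = -polarBody S := by
  ext y
  refine ⟨fun h x hx => ?_, fun h x hx => ?_⟩
  · simpa [dot_neg_left, dot_neg_right] using h (-x) (by simpa using hx)
  · simpa [dot_neg_left, dot_neg_right] using h (-x) hx

theorem subset_polarBody_polarBody (S : Set (Fin d → ℝ)) : S ⊆ polarBody (polarBody S) :=
  fun x hx y hy => dot_comm y x ▸ hy x hx

theorem inv_smul_mem_polarBody {v : Fin d → ℝ} {g : ℝ} (hg : 0 < g)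
    (h : ∀ x ∈ S, dot v x ≤ g) : g⁻¹ • v ∈ polarBody S := fun x hx => by
  rw [dot_comm, dot_smul_left, inv_mul_le_iff₀ hg, mul_one]
  exact h x hx

theorem polarBody_polarBody (hS : Convex ℝ S) (hSc : IsClosed S) (h0 : 0 ∈ S) :
    polarBody (polarBody S) = S := by
  refine Set.Subset.antisymm (fun x hx => ?_) (subset_polarBody_polarBody S)
  by_contra hxS
  obtain ⟨u, c, hu, hux⟩ := exists_dot_lt_of_notMem hS hSc hxS
  have hc : 0 < c := by simpa [dot] using hu 0 h0
  have := hx _ (inv_smul_mem_polarBody hc fun s hs => (hu s hs).le)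
  rw [dot_smul_left, inv_mul_le_iff₀ hc, mul_one] at this
  linarith

theorem polarBody_ssubset_polarBody (hS : Convex ℝ S) (hSc : IsClosed S) (h0 : 0 ∈ S)
    (h : S ⊂ T) : polarBody T ⊂ polarBody S :=
  (polarBody_anti h.subset).ssubset_of_not_superset fun h' => h.not_superset <|
    (subset_polarBody_polarBody T).trans <|
      (polarBody_anti h').trans (polarBody_polarBody hS hSc h0).subset

theorem isBounded_polarBody (hS : S ∈ 𝓝 0) : Bornology.IsBounded (polarBody S) := by
  obtain ⟨ε, hε, hball⟩ := Metric.mem_nhds_iff.1 hS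
  refine (Metric.isBounded_closedBall (x := 0) (r := 2 / ε)).subset fun y hy => ?_
  obtain ⟨x, hx, hxy⟩ := exists_mem_ball_le_dot hε y
  have := hy x (hball hx)
  rw [dot_comm] at this
  rw [mem_closedBall_zero_iff, le_div_iff₀ hε]
  linarith

theorem polarBody_mem_nhds (hS : Bornology.IsBounded S) : polarBody S ∈ 𝓝 0 := by
  obtain ⟨R, hR⟩ := hS.subset_closedBall 0
  refine Metric.mem_nhds_iff.2 ⟨1 / (d * |R| + 1), by positivity, fun y hy x hx => ?_⟩
  rw [mem_ball_zero_iff] at hy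
  have hx : ‖x‖ ≤ |R| := (mem_closedBall_zero_iff.1 (hR hx)).trans (le_abs_self R)
  calc dot x y ≤ d * ‖x‖ * ‖y‖ := (le_abs_self _).trans (abs_dot_le x y)
    _ ≤ d * |R| * (1 / (d * |R| + 1)) := by gcongr
    _ ≤ 1 := by rw [mul_one_div, div_le_one (by positivity)]; linarith

theorem isConvexBody_polarBody (hS : Bornology.IsBounded S) (h0 : S ∈ 𝓝 0) :
    IsConvexBody (polarBody S) :=
  ⟨convex_polarBody S,
    Metric.isCompact_of_isClosed_isBounded (isClosed_polarBody S) (isBounded_polarBody h0),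
    ⟨0, mem_interior_iff_mem_nhds.2 (polarBody_mem_nhds hS)⟩⟩

theorem mem_nhds_zero_of_neg_eq (hS : Convex ℝ S) (hsym : -S = S) (hint : (interior S).Nonempty) :
    S ∈ 𝓝 0 := by
  obtain ⟨x, hx⟩ := hint
  have hnx : -x ∈ S := hsym ▸ Set.neg_mem_neg.2 (interior_subset hx)
  have := hS.combo_interior_self_mem_interior hx hnx (by norm_num : (0 : ℝ) < 2⁻¹)
    (by norm_num : (0 : ℝ) ≤ 2⁻¹) (by norm_num)
  rw [smul_neg, add_neg_cancel] at this
  exact mem_interior_iff_mem_nhds.1 this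

end Polar

theorem exists_segment_subset_iff_half_smul_mem {E : Type*} [AddCommGroup E] [Module ℝ E]
    {K : Set E} (hK : Convex ℝ K) (hsym : -K = K) (w : E) :
    (∃ a, segment ℝ a (a + w) ⊆ K) ↔ (2⁻¹ : ℝ) • w ∈ K := by
  constructor
  · rintro ⟨a, ha⟩
    have hna : -a ∈ K := hsym ▸ Set.neg_mem_neg.2 (ha (left_mem_segment ℝ a _))
    convert hK (ha (right_mem_segment ℝ a _)) hna (by norm_num : (0 : ℝ) ≤ 2⁻¹)
      (by norm_num : (0 : ℝ) ≤ 2⁻¹) (by norm_num) using 1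
    module
  · intro hw
    refine ⟨-((2⁻¹ : ℝ) • w), hK.segment_subset (hsym ▸ Set.neg_mem_neg.2 hw) ?_⟩
    convert hw using 1
    module

theorem IsCompact.sub {E : Type*} [AddGroup E] [TopologicalSpace E] [IsTopologicalAddGroup E]
    {s t : Set E} (hs : IsCompact s) (ht : IsCompact t) : IsCompact (s - t) := by
  rw [sub_eq_add_neg]
  exact hs.add ht.neg

section Width

variable {d : ℕ} {S T : Set (Fin d → ℝ)} {y : Fin d → ℝ}

theorem le_widthDir (hS : IsCompact S) {a b : Fin d → ℝ} (ha : a ∈ S) (hb : b ∈ S) :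
    dot y (a - b) ≤ widthDir S y := by
  refine le_csSup (((hS.sub hS).image (continuous_dot y)).bddAbove.mono ?_) ⟨a, ha, b, hb, rfl⟩
  rintro _ ⟨a, ha, b, hb, rfl⟩
  exact ⟨a - b, Set.sub_mem_sub ha hb, rfl⟩

theorem widthDir_le (hS : S.Nonempty) {w : ℝ}
    (h : ∀ a ∈ S, ∀ b ∈ S, dot y (a - b) ≤ w) : widthDir S y ≤ w := by
  obtain ⟨a, ha⟩ := hS
  refine csSup_le ⟨_, a, ha, a, ha, rfl⟩ ?_
  rintro _ ⟨a, ha, b, hb, rfl⟩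
  exact h a ha b hb

theorem widthDir_nonneg (hS : IsCompact S) (hne : S.Nonempty) : 0 ≤ widthDir S y := by
  obtain ⟨a, ha⟩ := hne
  simpa [dot] using le_widthDir (y := y) hS ha ha

theorem widthDir_mono (hT : IsCompact T) (hS : S.Nonempty) (hST : S ⊆ T) :
    widthDir S y ≤ widthDir T y :=
  widthDir_le hS fun _ ha _ hb => le_widthDir hT (hST ha) (hST hb)

theorem widthDir_smul {t : ℝ} (ht : 0 ≤ t) (S : Set (Fin d → ℝ)) (y : Fin d → ℝ) :
    widthDir S (t • y) = t * widthDir S y := by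
  have : {r | ∃ a ∈ S, ∃ b ∈ S, r = dot (t • y) (a - b)} =
      t • {r | ∃ a ∈ S, ∃ b ∈ S, r = dot y (a - b)} := by
    ext r
    simp only [Set.mem_smul_set, Set.mem_ofPred_eq, smul_eq_mul, dot_smul_left]
    constructor
    · rintro ⟨a, ha, b, hb, rfl⟩
      exact ⟨_, ⟨a, ha, b, hb, rfl⟩, rfl⟩
    · rintro ⟨_, ⟨a, ha, b, hb, rfl⟩, rfl⟩
      exact ⟨a, ha, b, hb, rfl⟩
  rw [widthDir, this, Real.sSup_smul_of_nonneg ht, smul_eq_mul, widthDir]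

theorem exists_pos_mul_norm_le_widthDir (hS : IsCompact S) (h0 : S ∈ 𝓝 0) :
    ∃ ε > 0, ∀ y, ε * ‖y‖ ≤ widthDir S y := by
  obtain ⟨ε, hε, hball⟩ := Metric.mem_nhds_iff.1 h0
  refine ⟨ε, hε, fun y => ?_⟩
  obtain ⟨x, hx, hxy⟩ := exists_mem_ball_le_dot hε y
  have hnx : -x ∈ Metric.ball (0 : Fin d → ℝ) ε := by simpa using hx
  have := le_widthDir (y := y) hS (hball hx) (hball hnx)
  rw [dot_sub_right, dot_neg_right] at this
  linarith

theorem mem_polarBody_iff_widthDir_le (hS : IsCompact S) (hne : S.Nonempty) (hsym : -S = S)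
    {u : Fin d → ℝ} : u ∈ polarBody S ↔ widthDir S u ≤ 2 := by
  have hneg : ∀ x ∈ S, -x ∈ S := fun x hx => hsym ▸ Set.neg_mem_neg.2 hx
  constructor
  · intro hu
    refine widthDir_le hne fun a ha b hb => ?_
    have h₁ := hu a ha
    have h₂ := hu _ (hneg b hb)
    rw [dot_neg_left, dot_comm] at h₂
    rw [dot_sub_right, dot_comm u a]
    linarith
  · intro hw x hx
    have := le_widthDir (y := u) hS hx (hneg x hx)
    rw [sub_neg_eq_add, dot_add_right, dot_comm u x] at this
    linarith

theorem exists_segment_subset_polarBody_iff (hS : IsCompact S) (hne : S.Nonempty)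
    (hsym : -S = S) {t : ℝ} (ht : 0 ≤ t) (v : Fin d → ℝ) :
    (∃ a, segment ℝ a (a + t • v) ⊆ polarBody S) ↔ t * widthDir S v ≤ 4 := by
  rw [exists_segment_subset_iff_half_smul_mem (convex_polarBody S)
      (by rw [← polarBody_neg, hsym]), smul_smul, mem_polarBody_iff_widthDir_le hS hne hsym,
    widthDir_smul (by positivity), mul_assoc]
  constructor <;> intro h <;> linarith

end Width

section HalfDifference

variable {d : ℕ} {C C' : Set (Fin d → ℝ)}

theorem mem_half_smul_sub_iff {x : Fin d → ℝ} :
    x ∈ (2⁻¹ : ℝ) • (C - C) ↔ ∃ a ∈ C, ∃ b ∈ C, (2⁻¹ : ℝ) • (a - b) = x := by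
  simp only [Set.mem_smul_set, Set.mem_sub]
  constructor
  · rintro ⟨_, ⟨a, ha, b, hb, rfl⟩, rfl⟩
    exact ⟨a, ha, b, hb, rfl⟩
  · rintro ⟨a, ha, b, hb, rfl⟩
    exact ⟨_, ⟨a, ha, b, hb, rfl⟩, rfl⟩

theorem neg_half_smul_sub (C : Set (Fin d → ℝ)) :
    -((2⁻¹ : ℝ) • (C - C)) = (2⁻¹ : ℝ) • (C - C) := by
  rw [← Set.smul_set_neg, neg_sub]

theorem isConvexBody_half_smul_sub (hC : IsConvexBody C) :
    IsConvexBody ((2⁻¹ : ℝ) • (C - C)) := by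
  obtain ⟨hconv, hcomp, x, hx⟩ := hC
  refine ⟨(hconv.sub hconv).smul _, (hcomp.sub hcomp).smul _, ?_⟩
  rw [interior_smul₀ (by norm_num)]
  exact ⟨_, Set.smul_mem_smul_set
    (subset_interior_sub_left (Set.sub_mem_sub hx (interior_subset hx)))⟩

theorem half_smul_sub_subset (hC : Convex ℝ C) (hsym : -C = C) (h : C' ⊆ C) :
    (2⁻¹ : ℝ) • (C' - C') ⊆ C := by
  intro x hx
  obtain ⟨a, ha, b, hb, rfl⟩ := mem_half_smul_sub_iff.1 hx
  have hnb : -b ∈ C := hsym ▸ Set.neg_mem_neg.2 (h hb)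
  convert hC (h ha) hnb (by norm_num : (0 : ℝ) ≤ 2⁻¹) (by norm_num : (0 : ℝ) ≤ 2⁻¹)
    (by norm_num) using 1
  module

theorem widthDir_half_smul_sub (hC : IsCompact C) (hne : C.Nonempty) (y : Fin d → ℝ) :
    widthDir ((2⁻¹ : ℝ) • (C - C)) y = widthDir C y := by
  obtain ⟨c, hc⟩ := hne
  have hD : ((2⁻¹ : ℝ) • (C - C)).Nonempty :=
    ⟨_, mem_half_smul_sub_iff.2 ⟨c, hc, c, hc, rfl⟩⟩
  refine le_antisymm (widthDir_le hD fun p hp q hq => ?_)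
    (widthDir_le ⟨c, hc⟩ fun a ha b hb => ?_)
  · obtain ⟨a, ha, b, hb, rfl⟩ := mem_half_smul_sub_iff.1 hp
    obtain ⟨a', ha', b', hb', rfl⟩ := mem_half_smul_sub_iff.1 hq
    have h₁ := le_widthDir (y := y) hC ha ha'
    have h₂ := le_widthDir (y := y) hC hb' hb
    have : (2⁻¹ : ℝ) • (a - b) - (2⁻¹ : ℝ) • (a' - b') =
        (2⁻¹ : ℝ) • (a - a') + (2⁻¹ : ℝ) • (b' - b) := by module
    rw [this, dot_add_right, dot_smul_right, dot_smul_right]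
    linarith
  · have : a - b = (2⁻¹ : ℝ) • (a - b) - (2⁻¹ : ℝ) • (b - a) := by module
    rw [this]
    exact le_widthDir ((hC.sub hC).smul _) (mem_half_smul_sub_iff.2 ⟨a, ha, b, hb, rfl⟩)
      (mem_half_smul_sub_iff.2 ⟨b, hb, a, ha, rfl⟩)

theorem eq_of_half_smul_sub_eq (hC' : Convex ℝ C') (hC'c : IsClosed C') (hC : IsCompact C)
    (hsym : -C = C) (hsub : C' ⊆ C) (heq : (2⁻¹ : ℝ) • (C' - C') = C) : C' = C := by
  refine hsub.antisymm fun x hx => ?_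
  by_contra hx'
  obtain ⟨u, c, hu, hux⟩ := exists_dot_lt_of_notMem hC' hC'c hx'
  obtain ⟨z, hz, hmax⟩ := hC.exists_isMaxOn ⟨x, hx⟩ (continuous_dot u).continuousOn
  have hxz : dot u x ≤ dot u z := hmax hx
  obtain ⟨a, ha, b, hb, rfl⟩ := mem_half_smul_sub_iff.1 (heq ▸ hz)
  have hbz : dot u (-b) ≤ dot u ((2⁻¹ : ℝ) • (a - b)) :=
    hmax (hsym ▸ Set.neg_mem_neg.2 (hsub hb))
  have hac := hu a ha
  rw [dot_smul_right, dot_sub_right] at hxz hbz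
  rw [dot_neg_right] at hbz
  linarith

end HalfDifference

section Lattice

variable {d : ℕ} {L : Set (Fin d → ℝ)}

theorem sub_mem_dualLattice {y z : Fin d → ℝ} (hy : y ∈ dualLattice L)
    (hz : z ∈ dualLattice L) : y - z ∈ dualLattice L := fun x hx => by
  obtain ⟨m, hm⟩ := hy x hx
  obtain ⟨n, hn⟩ := hz x hx
  exact ⟨m - n, by rw [dot_sub_right, hm, hn]; push_cast; ring⟩

theorem exists_pos_le_norm_of_mem_dualLattice (hL : IsLattice L) :
    ∃ δ > 0, ∀ y ∈ dualLattice L, y ≠ 0 → δ ≤ ‖y‖ := by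
  obtain ⟨B, rfl⟩ := hL
  set M := ∑ i, ‖B i‖
  refine ⟨1 / (d * M + 1), by positivity, fun y hy hy0 => ?_⟩
  obtain ⟨i, hi⟩ : ∃ i, dot (B i) y ≠ 0 := by
    by_contra! h
    have hyy : dot y y = ∑ i, B.repr y i * dot (B i) y := by
      nth_rw 1 [← B.sum_repr y]
      exact (sum_dotProduct _ _ _).trans (Finset.sum_congr rfl fun i _ => smul_dotProduct _ _ _)
    exact hy0 (dotProduct_self_eq_zero.1 (by simpa [h] using hyy : dot y y = 0))
  obtain ⟨n, hn⟩ := hy (B i) ⟨Pi.single i 1, by simp [Pi.single_apply]⟩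
  have hn0 : n ≠ 0 := by rintro rfl; exact hi (by simpa using hn)
  have hM : ‖B i‖ ≤ M :=
    Finset.single_le_sum (fun j _ => norm_nonneg (B j)) (Finset.mem_univ i)
  rw [div_le_iff₀ (by positivity)]
  calc 1 ≤ |dot (B i) y| := by rw [hn]; exact_mod_cast Int.one_le_abs hn0
    _ ≤ d * ‖B i‖ * ‖y‖ := abs_dot_le _ _
    _ ≤ d * M * ‖y‖ := by gcongr
    _ ≤ ‖y‖ * (d * M + 1) := by nlinarith [norm_nonneg y]

theorem exists_ne_zero_mem_dualLattice (hL : IsLattice L) (hd : 0 < d) :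
    ∃ y ∈ dualLattice L, y ≠ 0 := by
  obtain ⟨B, rfl⟩ := hL
  let i₀ : Fin d := ⟨0, hd⟩
  obtain ⟨u, hu⟩ := exists_apply_eq_dot (B.coord i₀)
  refine ⟨u, ?_, fun h => ?_⟩
  · rintro _ ⟨z, rfl⟩
    refine ⟨z i₀, ?_⟩
    rw [dot_comm, ← hu, Module.Basis.coord_apply, B.repr_sum_self]
  · simpa [h, dot] using hu (B i₀)

theorem exists_isPrimitiveVec_smul (hL : IsLattice L) {y : Fin d → ℝ}
    (hy : y ∈ dualLattice L) (hy0 : y ≠ 0) :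
    ∃ t : ℝ, 0 < t ∧ t ≤ 1 ∧ IsPrimitiveVec (dualLattice L) (t • y) := by
  obtain ⟨δ, hδ, hdisc⟩ := exists_pos_le_norm_of_mem_dualLattice hL
  have hy' : 0 < ‖y‖ := norm_pos_iff.2 hy0
  set P := {t : ℝ | 0 < t ∧ t • y ∈ dualLattice L}
  have hgap : ∀ t ∈ P, δ / ‖y‖ ≤ t := fun t ⟨ht, hty⟩ => by
    have := hdisc _ hty (smul_ne_zero ht.ne' hy0)
    rwa [norm_smul, Real.norm_of_nonneg ht.le, ← div_le_iff₀ hy'] at this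
  have h1 : (1 : ℝ) ∈ P := ⟨one_pos, by rwa [one_smul]⟩
  have hbdd : BddBelow P := ⟨_, hgap⟩
  obtain ⟨t, htP, ht⟩ : ∃ t ∈ P, t < sInf P + δ / ‖y‖ :=
    exists_lt_of_csInf_lt ⟨1, h1⟩ (by linarith [div_pos hδ hy'])
  -- the gap `δ / ‖y‖` between points of `P` makes `t` the least element of `P`
  have hmin : ∀ s ∈ P, t ≤ s := fun s hs => by
    by_contra! hst
    have hts : t - s ∈ P :=
      ⟨by linarith, by rw [sub_smul]; exact sub_mem_dualLattice htP.2 hs.2⟩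
    linarith [hgap _ hts, csInf_le hbdd hs]
  refine ⟨t, htP.1, hmin 1 h1, htP.2, smul_ne_zero htP.1.ne' hy0, fun s hs hs1 hsy => ?_⟩
  rw [smul_smul] at hsy
  have := hmin _ ⟨mul_pos hs htP.1, hsy⟩
  nlinarith [htP.1]

end Lattice

section WidthAndDiameter

variable {d : ℕ} {L K S T : Set (Fin d → ℝ)}

theorem latticeWidth_le_widthDir (hS : IsCompact S) (hne : S.Nonempty) {y : Fin d → ℝ}
    (hy : y ∈ dualLattice L) (hy0 : y ≠ 0) : latticeWidth S L ≤ widthDir S y :=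
  csInf_le ⟨0, by rintro _ ⟨z, -, -, rfl⟩; exact widthDir_nonneg hS hne⟩
    ⟨y, hy, hy0, rfl⟩

theorem latticeWidth_pos (hL : IsLattice L) (hd : 0 < d) (hS : IsCompact S) (h0 : S ∈ 𝓝 0) :
    0 < latticeWidth S L := by
  obtain ⟨ε, hε, hεS⟩ := exists_pos_mul_norm_le_widthDir hS h0
  obtain ⟨δ, hδ, hdisc⟩ := exists_pos_le_norm_of_mem_dualLattice hL
  obtain ⟨y, hy, hy0⟩ := exists_ne_zero_mem_dualLattice hL hd
  refine lt_of_lt_of_le (mul_pos hε hδ) (le_csInf ⟨_, y, hy, hy0, rfl⟩ ?_)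
  rintro _ ⟨z, hz, hz0, rfl⟩
  exact (mul_le_mul_of_nonneg_left (hdisc z hz hz0) hε.le).trans (hεS z)

theorem latticeWidth_mono (hL : IsLattice L) (hd : 0 < d) (hS : IsCompact S) (hne : S.Nonempty)
    (hT : IsCompact T) (hST : S ⊆ T) : latticeWidth S L ≤ latticeWidth T L := by
  obtain ⟨y, hy, hy0⟩ := exists_ne_zero_mem_dualLattice hL hd
  refine le_csInf ⟨_, y, hy, hy0, rfl⟩ ?_
  rintro _ ⟨z, hz, hz0, rfl⟩
  exact (latticeWidth_le_widthDir hS hne hz hz0).trans (widthDir_mono hT hne hST)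

theorem le_latticeDiam (hL : IsLattice L) (hK : Bornology.IsBounded K) {a v : Fin d → ℝ}
    (hv : IsPrimitiveVec (dualLattice L) v) {t : ℝ} (ht : 0 ≤ t)
    (hseg : segment ℝ a (a + t • v) ⊆ K) : t ≤ latticeDiam K (dualLattice L) := by
  obtain ⟨δ, hδ, hdisc⟩ := exists_pos_le_norm_of_mem_dualLattice hL
  obtain ⟨R, hR⟩ := Metric.isBounded_iff.1 hK
  refine le_csSup ⟨R / δ, ?_⟩ ⟨ht, a, v, hv, hseg⟩
  rintro s ⟨hs, b, w, hw, hbw⟩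
  have := hR (hbw (right_mem_segment ℝ _ _)) (hbw (left_mem_segment ℝ _ _))
  rw [dist_eq_norm, add_sub_cancel_left, norm_smul, Real.norm_of_nonneg hs] at this
  rw [le_div_iff₀ hδ]
  nlinarith [hdisc w hw.1 hw.2.1]

end WidthAndDiameter

section PolarDuality

variable {d : ℕ} {L C K : Set (Fin d → ℝ)}

theorem four_div_widthDir_polarBody_le_latticeDiam (hL : IsLattice L) (hK : IsConvexBody K)
    (h0 : K ∈ 𝓝 0) {v : Fin d → ℝ} (hv : IsPrimitiveVec (dualLattice L) v) :
    4 / widthDir (polarBody K) v ≤ latticeDiam K (dualLattice L) := by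
  obtain ⟨hconv, hcomp, -⟩ := hK
  obtain ⟨-, hK'c, -⟩ := isConvexBody_polarBody hcomp.isBounded h0
  have hK'0 := polarBody_mem_nhds hcomp.isBounded
  have hK'K := polarBody_polarBody hconv hcomp.isClosed (mem_of_mem_nhds h0)
  have hne : (polarBody K).Nonempty := ⟨0, zero_mem_polarBody K⟩
  -- the extreme values `g₁ = max dot v` and `-g₂ = min dot v` on `K*` give the points
  -- `g₁⁻¹ • v` and `g₂⁻¹ • -v` of `K** = K`, at lattice distance `g₁⁻¹ + g₂⁻¹`
  obtain ⟨a, ha, hamax⟩ := hK'c.exists_isMaxOn hne (continuous_dot v).continuousOn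
  obtain ⟨b, hb, hbmax⟩ := hK'c.exists_isMaxOn hne (continuous_dot (-v)).continuousOn
  set g₁ := dot v a
  set g₂ := dot (-v) b with hg₂_def
  have hg₁ : 0 < g₁ := by
    obtain ⟨x, hx, hvx⟩ := exists_pos_dot_of_mem_nhds hK'0 hv.2.1
    exact hvx.trans_le (hamax hx)
  have hg₂ : 0 < g₂ := by
    obtain ⟨x, hx, hvx⟩ := exists_pos_dot_of_mem_nhds hK'0 (neg_ne_zero.2 hv.2.1)
    exact hvx.trans_le (hbmax hx)
  have h₁ : g₁⁻¹ • v ∈ K := hK'K ▸ inv_smul_mem_polarBody hg₁ fun x hx => hamax hx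
  have h₂ : g₂⁻¹ • -v ∈ K := hK'K ▸ inv_smul_mem_polarBody hg₂ fun x hx => hbmax hx
  have hdiam : g₁⁻¹ + g₂⁻¹ ≤ latticeDiam K (dualLattice L) := by
    refine le_latticeDiam hL hcomp.isBounded hv (by positivity) (a := g₂⁻¹ • -v) ?_
    convert hconv.segment_subset h₂ h₁ using 2
    module
  have hwidth : g₁ + g₂ ≤ widthDir (polarBody K) v := by
    have := le_widthDir (y := v) hK'c ha hb
    rw [dot_sub_right] at this
    rw [hg₂_def, dot_neg_left]
    linarith
  calc 4 / widthDir (polarBody K) v ≤ 4 / (g₁ + g₂) := by gcongr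
    _ ≤ g₁⁻¹ + g₂⁻¹ := by
      rw [div_le_iff₀ (by positivity)]
      field_simp
      nlinarith [sq_nonneg (g₁ - g₂)]
    _ ≤ _ := hdiam

theorem four_div_latticeWidth_polarBody_le_latticeDiam (hL : IsLattice L) (hd : 0 < d)
    (hK : IsConvexBody K) (h0 : K ∈ 𝓝 0) :
    4 / latticeWidth (polarBody K) L ≤ latticeDiam K (dualLattice L) := by
  obtain ⟨-, hK'c, -⟩ := isConvexBody_polarBody hK.2.1.isBounded h0
  have hK'0 := polarBody_mem_nhds hK.2.1.isBounded
  obtain ⟨ε, hε, hεw⟩ := exists_pos_mul_norm_le_widthDir hK'c hK'0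
  have hwpos : ∀ y : Fin d → ℝ, y ≠ 0 → 0 < widthDir (polarBody K) y := fun y hy =>
    (mul_pos hε (norm_pos_iff.2 hy)).trans_le (hεw y)
  have key : ∀ y ∈ dualLattice L, y ≠ 0 →
      4 / widthDir (polarBody K) y ≤ latticeDiam K (dualLattice L) := by
    intro y hy hy0
    obtain ⟨t, ht, ht1, hv⟩ := exists_isPrimitiveVec_smul hL hy hy0
    calc 4 / widthDir (polarBody K) y ≤ 4 / widthDir (polarBody K) (t • y) := by
          gcongr
          · exact hwpos _ hv.2.1
          · rw [widthDir_smul ht.le]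
            exact mul_le_of_le_one_left (widthDir_nonneg hK'c ⟨0, zero_mem_polarBody K⟩) ht1
      _ ≤ _ := four_div_widthDir_polarBody_le_latticeDiam hL hK h0 hv
  obtain ⟨y₀, hy₀, hy₀0⟩ := exists_ne_zero_mem_dualLattice hL hd
  have hD : 0 < latticeDiam K (dualLattice L) :=
    (div_pos four_pos (hwpos y₀ hy₀0)).trans_le (key y₀ hy₀ hy₀0)
  rw [div_le_comm₀ (latticeWidth_pos hL hd hK'c hK'0) hD]
  refine le_csInf ⟨_, y₀, hy₀, hy₀0, rfl⟩ ?_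
  rintro _ ⟨y, hy, hy0, rfl⟩
  exact (div_le_comm₀ (hwpos y hy0) hD).1 (key y hy hy0)

theorem latticeDiam_polarBody (hL : IsLattice L) (hd : 0 < d) (hC : IsConvexBody C)
    (hsym : -C = C) : latticeDiam (polarBody C) (dualLattice L) = 4 / latticeWidth C L := by
  obtain ⟨hconv, hcomp, hint⟩ := hC
  have h0 := mem_nhds_zero_of_neg_eq hconv hsym hint
  have hne : C.Nonempty := ⟨0, mem_of_mem_nhds h0⟩
  have hW := latticeWidth_pos hL hd hcomp h0 (L := L)
  refine le_antisymm (Real.sSup_le ?_ (by positivity)) ?_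
  · rintro t ⟨ht, a, v, hv, hseg⟩
    have hlen := (exists_segment_subset_polarBody_iff hcomp hne hsym ht v).1 ⟨a, hseg⟩
    have hwv := latticeWidth_le_widthDir hcomp hne hv.1 hv.2.1
    rw [le_div_iff₀ hW]
    nlinarith
  · have := four_div_latticeWidth_polarBody_le_latticeDiam hL hd
      (isConvexBody_polarBody hcomp.isBounded h0) (polarBody_mem_nhds hcomp.isBounded)
    rwa [polarBody_polarBody hconv hcomp.isClosed (mem_of_mem_nhds h0)] at this

theorem IsLatticeReduced.isLatticeComplete_polarBody (hL : IsLattice L) (hd : 0 < d)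
    (hsym : -C = C) (hred : IsLatticeReduced C L) :
    IsLatticeComplete (polarBody C) (dualLattice L) := by
  obtain ⟨hC, hmin⟩ := hred
  obtain ⟨hconv, hcomp, hint⟩ := hC
  have h0 := mem_nhds_zero_of_neg_eq hconv hsym hint
  have hC' := isConvexBody_polarBody hcomp.isBounded h0
  refine ⟨hC', fun K hK hCK hdiam => ?_⟩
  have hK0 : K ∈ 𝓝 0 := mem_of_superset (polarBody_mem_nhds hcomp.isBounded) hCK.subset
  have hK' := isConvexBody_polarBody hK.2.1.isBounded hK0
  have hK'C : polarBody K ⊂ C := by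
    simpa [polarBody_polarBody hconv hcomp.isClosed (mem_of_mem_nhds h0)] using
      polarBody_ssubset_polarBody hC'.1 hC'.2.1.isClosed (zero_mem_polarBody C) hCK
  have hlt : latticeWidth (polarBody K) L < latticeWidth C L :=
    (latticeWidth_mono hL hd hK'.2.1 ⟨0, zero_mem_polarBody K⟩ hcomp hK'C.subset).lt_of_ne
      (hmin _ hK' hK'C)
  have hK'pos := latticeWidth_pos hL hd hK'.2.1 (polarBody_mem_nhds hK.2.1.isBounded) (L := L)
  refine ne_of_gt ?_ hdiam
  calc latticeDiam (polarBody C) (dualLattice L) = 4 / latticeWidth C L :=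
        latticeDiam_polarBody hL hd ⟨hconv, hcomp, hint⟩ hsym
    _ < 4 / latticeWidth (polarBody K) L := div_lt_div_of_pos_left four_pos hK'pos hlt
    _ ≤ latticeDiam K (dualLattice L) :=
        four_div_latticeWidth_polarBody_le_latticeDiam hL hd hK hK0

theorem IsLatticeComplete.isLatticeReduced_of_polarBody (hL : IsLattice L) (hd : 0 < d)
    (hC : IsConvexBody C) (hsym : -C = C)
    (hcomp : IsLatticeComplete (polarBody C) (dualLattice L)) : IsLatticeReduced C L := by
  refine ⟨hC, fun C' hC' hC'C hwidth => ?_⟩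
  set D := (2⁻¹ : ℝ) • (C' - C')
  have hD : IsConvexBody D := isConvexBody_half_smul_sub hC'
  have hDsym : -D = D := neg_half_smul_sub C'
  have hD0 := mem_nhds_zero_of_neg_eq hD.1 hDsym hD.2.2
  have hDC : D ⊂ C := (half_smul_sub_subset hC.1 hsym hC'C.subset).ssubset_of_ne fun h =>
    hC'C.ne (eq_of_half_smul_sub_eq hC'.1 hC'.2.1.isClosed hC.2.1 hsym hC'C.subset h)
  have hDw : latticeWidth D L = latticeWidth C L := by
    rw [← hwidth]
    simp only [latticeWidth, D, widthDir_half_smul_sub hC'.2.1 (hC'.2.2.mono interior_subset)]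
  refine hcomp.2 (polarBody D) (isConvexBody_polarBody hD.2.1.isBounded hD0)
    (polarBody_ssubset_polarBody hD.1 hD.2.1.isClosed (mem_of_mem_nhds hD0) hDC) ?_
  rw [latticeDiam_polarBody hL hd hD hDsym, latticeDiam_polarBody hL hd hC hsym, hDw]

theorem isWidthDirection_iff_isDiameterDirection_polarBody (hL : IsLattice L) (hd : 0 < d)
    (hC : IsConvexBody C) (hsym : -C = C) (y : Fin d → ℝ) :
    IsWidthDirection C L y ↔ IsDiameterDirection (polarBody C) (dualLattice L) y := by
  obtain ⟨hconv, hcomp, hint⟩ := hC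
  have h0 := mem_nhds_zero_of_neg_eq hconv hsym hint
  have hne : C.Nonempty := ⟨0, mem_of_mem_nhds h0⟩
  have hW := latticeWidth_pos hL hd hcomp h0 (L := L)
  rw [IsDiameterDirection, latticeDiam_polarBody hL hd ⟨hconv, hcomp, hint⟩ hsym,
    exists_segment_subset_polarBody_iff hcomp hne hsym (by positivity), div_mul_eq_mul_div,
    div_le_iff₀ hW, mul_le_mul_iff_right₀ four_pos]
  constructor
  · rintro ⟨hy, hy0, hw⟩
    refine ⟨⟨hy, hy0, fun s hs hs1 hsy => ?_⟩, hw.le⟩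
    have := latticeWidth_le_widthDir hcomp hne hsy (smul_ne_zero hs.ne' hy0)
    rw [widthDir_smul hs.le, hw] at this
    nlinarith
  · rintro ⟨⟨hy, hy0, -⟩, hw⟩
    exact ⟨hy, hy0, hw.antisymm (latticeWidth_le_widthDir hcomp hne hy hy0)⟩

end PolarDuality

theorem not_ssubset_of_isConvexBody_of_dim_zero {K K' : Set (Fin 0 → ℝ)} (hK : IsConvexBody K) :
    ¬K ⊂ K' := fun h => by
  obtain ⟨x, hx⟩ := hK.2.2
  exact h.not_superset fun y _ => Subsingleton.elim x y ▸ interior_subset hx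

/-- an origin-symmetric convex body is lattice reduced w.r.t. `L`
iff its polar body is lattice complete w.r.t. the dual lattice; moreover its
width directions coincide with the diameter directions of the polar body. -/
theorem symmetric_reduced_iff_polar_complete {d : ℕ} (C L : Set (Fin d → ℝ))
    (hC : IsConvexBody C) (hsym : C = -C) (hL : IsLattice L) :
    (IsLatticeReduced C L ↔ IsLatticeComplete (polarBody C) (dualLattice L)) ∧
    (∀ y, IsWidthDirection C L y ↔
      IsDiameterDirection (polarBody C) (dualLattice L) y) := by
  rcases Nat.eq_zero_or_pos d with rfl | hd
  · have hC' : IsConvexBody (polarBody C) := isConvexBody_polarBody hC.2.1.isBounded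
      (mem_nhds_zero_of_neg_eq hC.1 hsym.symm hC.2.2)
    refine ⟨⟨fun _ => ⟨hC', fun K _ h => ?_⟩, fun _ => ⟨hC, fun K hK h => ?_⟩⟩, fun y => ?_⟩
    · exact (not_ssubset_of_isConvexBody_of_dim_zero hC' h).elim
    · exact (not_ssubset_of_isConvexBody_of_dim_zero hK h).elim
    · have hy : y = 0 := Subsingleton.elim y 0
      exact ⟨fun h => (h.2.1 hy).elim, fun h => (h.1.2.1 hy).elim⟩
  · exact ⟨⟨fun h => h.isLatticeComplete_polarBody hL hd hsym.symm,
      fun h => h.isLatticeReduced_of_polarBody hL hd hC hsym.symm⟩,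
      isWidthDirection_iff_isDiameterDirection_polarBody hL hd hC hsym.symm⟩
end
end
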